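/- arXiv:2301.00778 — 3 statements merged into one kernel-verified Lean document; each statement's English description precedes it below -/
import Mathlib

section
/- Well-definedness of π⁻ (second part of Lemma 5.1): For every π, π'' ∈ ℝ[[z_k,z_n]], every c ∈ ℝ[[z_k]], and every multi-index β: only finitely many k ∈ ℕ satisfy (z_k π^k π'')_β ≠ 0, and only finitely many l ∈ ℕ satisfy (π^l (D⁽⁰⁾)^l c)_β ≠ 0. Consequently, for any ξ ∈ ℝ, π⁻ := Σ_{k≥0} z_k π^k π'' − Σ_{l≥0} (1/l!) π^l (D⁽⁰⁾)^l c + ξ 𝟙 is a well-defined element of ℝ[[z_k,z_n]]. -/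
open MvPowerSeries

noncomputable section

/-- Indices `n ∈ ℕ² \ {(0,0)}` for the variables `z_n`. -/
abbrev Pos2 : Type := {p : ℕ × ℕ // p ≠ (0, 0)}

/-- The variables: `z_k` for `k ∈ ℕ` (left) and `z_n` for `n ∈ ℕ²\{0}` (right). -/
abbrev Var : Type := ℕ ⊕ Pos2

/-- Multi-indices: finitely supported functions from the variables to ℕ. -/
abbrev MIdx : Type := Var →₀ ℕ

/-- The algebra ℝ[[z_k, z_n]] of formal power series. -/
abbrev FPS : Type := MvPowerSeries Var ℝ

/-- The variable `z_k` as a power series. -/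
def zk (k : ℕ) : FPS := MvPowerSeries.X (Sum.inl k)

/-- The variable `z_n` as a power series. -/
def zn (n : Pos2) : FPS := MvPowerSeries.X (Sum.inr n)

/-- The derivation `D⁽⁰⁾ = Σ_k (k+1) z_{k+1} ∂_{z_k}`, defined componentwise by
`(D⁽⁰⁾π)_β = Σ_{k, β(k+1) ≥ 1} (k+1)(β(k)+1) π_{β + e_k - e_{k+1}}`. -/
def Dzero (π : FPS) : FPS := fun β =>
  ∑ j ∈ β.support,
    (match j with
     | Sum.inl (k + 1) =>
         ((k : ℝ) + 1) * ((β (Sum.inl k) : ℝ) + 1) *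
           MvPowerSeries.coeff (R := ℝ)
             (β + Finsupp.single (Sum.inl k) 1 - Finsupp.single (Sum.inl (k + 1)) 1) π
     | _ => 0)

/-- `c ∈ ℝ[[z_k]]`: the subalgebra of series with no `z_n`-dependence. -/
def OnlyZk (c : FPS) : Prop :=
  ∀ β : MIdx, (∃ n : Pos2, β (Sum.inr n) ≠ 0) → MvPowerSeries.coeff (R := ℝ) β c = 0

/-- `[β] := Σ_k k β(k) − Σ_n β(n)`. -/
def bracketZ (β : MIdx) : ℤ :=
  β.sum fun j m => (match j with | Sum.inl k => (k : ℤ) | Sum.inr _ => -1) * (m : ℤ)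

/-- `|β|_p := Σ_n |n| β(n)` where `|n| = n₁ + 2 n₂`. -/
def homP (β : MIdx) : ℝ :=
  β.sum fun j m =>
    (match j with | Sum.inl _ => (0 : ℝ) | Sum.inr n => (n.val.1 : ℝ) + 2 * n.val.2) * (m : ℝ)

/-- The homogeneity `|β| := α (1 + [β]) + |β|_p`. -/
def hom (α : ℝ) (β : MIdx) : ℝ := α * (1 + (bracketZ β : ℝ)) + homP β

/-- `|β|_≺ := |β| + λ β(0)`; the ordering is `γ ≺ β iff |γ|_≺ < |β|_≺`. -/
def ordP (α lam : ℝ) (β : MIdx) : ℝ := hom α β + lam * (β (Sum.inl 0) : ℝ)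

/-
A coefficient of `z_k · f` at `β` vanishes unless `β(k) ≠ 0`, which holds for only
finitely many `k`. For the second sum, give `z_k` the weight `k` and `z_n` the weight `0`:
`D⁽⁰⁾` replaces a `z_k` by a `z_{k+1}`, so it raises the weighted order by at least one, hence
`π^l (D⁽⁰⁾)^l c` has weighted order at least `l` and its coefficient at `β` vanishes once `l`
exceeds the weight of `β`. With both sums finite, `π⁻` is given coefficientwise.
-/

theorem MvPowerSeries.coeff_X_mul_eq_zero {σ R : Type*} [Semiring R] {s : σ} {d : σ →₀ ℕ}
    (hd : d s = 0) (f : MvPowerSeries σ R) : coeff d (X s * f) = 0 := by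
  rw [X_def, coeff_monomial_mul, if_neg]
  rw [Finsupp.single_le_iff, hd]
  exact Nat.not_succ_le_zero 0

/-- Chosen so that `D⁽⁰⁾` raises the weight by one. -/
def zkWeight : Var → ℕ := Sum.elim id 0

lemma weight_Dzero_index {β : MIdx} {k : ℕ} (hk : β (Sum.inl (k + 1)) ≠ 0) :
    Finsupp.weight zkWeight
        (β + Finsupp.single (Sum.inl k) 1 - Finsupp.single (Sum.inl (k + 1)) 1) + 1 =
      Finsupp.weight zkWeight β := by
  have hk' : (β + Finsupp.single (Sum.inl k) 1 : MIdx) (Sum.inl (k + 1)) ≠ 0 := by simpa using hk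
  have key := Finsupp.weight_sub_single_add (w := zkWeight) hk'
  simp only [map_add, Finsupp.weight_single, smul_eq_mul, one_mul] at key
  change _ + (k + 1) = _ + k at key
  omega

lemma le_weightedOrder_Dzero (f : FPS) :
    f.weightedOrder zkWeight + 1 ≤ (Dzero f).weightedOrder zkWeight := by
  refine le_weightedOrder zkWeight fun β hβ => Finset.sum_eq_zero fun j hj => ?_
  rcases j with (_ | k) | n
  · rfl
  · dsimp only
    rw [coeff_eq_zero_of_lt_weightedOrder zkWeight, mul_zero]
    have := weight_Dzero_index (Finsupp.mem_support_iff.mp hj)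
    rw [← this, Nat.cast_add, Nat.cast_one] at hβ
    exact (ENat.add_lt_add_iff_right ENat.one_ne_top).mp hβ
  · rfl

lemma nat_le_weightedOrder_iterate_Dzero (f : FPS) (l : ℕ) :
    (l : ℕ∞) ≤ (Dzero^[l] f).weightedOrder zkWeight := by
  induction l with
  | zero => simp
  | succ l ih =>
    rw [Function.iterate_succ_apply', Nat.cast_succ]
    exact (add_le_add_left ih 1).trans (le_weightedOrder_Dzero _)

lemma coeff_mul_iterate_Dzero_eq_zero (π c : FPS) {β : MIdx} {l : ℕ}
    (hl : Finsupp.weight zkWeight β < l) : coeff β (π ^ l * Dzero^[l] c) = 0 := by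
  apply coeff_eq_zero_of_lt_weightedOrder zkWeight
  calc (Finsupp.weight zkWeight β : ℕ∞) < l := by exact_mod_cast hl
    _ ≤ (Dzero^[l] c).weightedOrder zkWeight := nat_le_weightedOrder_iterate_Dzero c l
    _ ≤ (π ^ l).weightedOrder zkWeight + (Dzero^[l] c).weightedOrder zkWeight := le_add_self
    _ ≤ _ := le_weightedOrder_mul zkWeight

lemma finite_setOf_coeff_zk_mul_ne_zero (π π'' : FPS) (β : MIdx) :
    {k : ℕ | coeff β (zk k * π ^ k * π'') ≠ 0}.Finite := by
  refine (β.support.finite_toSet.preimage Sum.inl_injective.injOn).subset fun k hk => ?_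
  rw [Set.mem_preimage, Finset.mem_coe, Finsupp.mem_support_iff]
  intro hβk
  exact hk (by rw [mul_assoc, zk, coeff_X_mul_eq_zero hβk])

lemma finite_setOf_coeff_mul_iterate_Dzero_ne_zero (π c : FPS) (β : MIdx) :
    {l : ℕ | coeff β (π ^ l * Dzero^[l] c) ≠ 0}.Finite :=
  (Set.finite_Iic (Finsupp.weight zkWeight β)).subset fun _ hl =>
    not_lt.mp fun hlt => hl (coeff_mul_iterate_Dzero_eq_zero π c hlt)

theorem stmt_9_general (π π'' c : FPS) :
    (∀ β : MIdx,
      {k : ℕ | MvPowerSeries.coeff (R := ℝ) β (zk k * π ^ k * π'') ≠ 0}.Finite ∧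
      {l : ℕ | MvPowerSeries.coeff (R := ℝ) β (π ^ l * Dzero^[l] c) ≠ 0}.Finite) ∧
    ∀ ξ : ℝ, ∃ pm : FPS, ∀ β : MIdx,
      MvPowerSeries.coeff (R := ℝ) β pm =
        (∑ᶠ k : ℕ, MvPowerSeries.coeff (R := ℝ) β (zk k * π ^ k * π''))
          - (∑ᶠ l : ℕ, ((l.factorial : ℝ))⁻¹ *
              MvPowerSeries.coeff (R := ℝ) β (π ^ l * Dzero^[l] c))
          + ξ * MvPowerSeries.coeff (R := ℝ) β 1 :=
  ⟨fun β => ⟨finite_setOf_coeff_zk_mul_ne_zero π π'' β,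
      finite_setOf_coeff_mul_iterate_Dzero_ne_zero π c β⟩,
    fun _ => ⟨fun _ => _, fun _ => rfl⟩⟩

/-- Well-definedness of `π⁻` (second part of Lemma 5.1): for `π, π'' ∈ ℝ[[z_k,z_n]]`
and `c ∈ ℝ[[z_k]]`, both sums in `π⁻` are componentwise finite; consequently, for any
`ξ ∈ ℝ`, `π⁻ = Σ_k z_k π^k π'' − Σ_l (1/l!) π^l (D⁽⁰⁾)^l c + ξ 𝟙` is a well-defined
element of ℝ[[z_k,z_n]]. -/
theorem stmt_9 (π π'' c : FPS) (hc : OnlyZk c) :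
    (∀ β : MIdx,
      {k : ℕ | MvPowerSeries.coeff (R := ℝ) β (zk k * π ^ k * π'') ≠ 0}.Finite ∧
      {l : ℕ | MvPowerSeries.coeff (R := ℝ) β (π ^ l * Dzero^[l] c) ≠ 0}.Finite) ∧
    ∀ ξ : ℝ, ∃ pm : FPS, ∀ β : MIdx,
      MvPowerSeries.coeff (R := ℝ) β pm =
        (∑ᶠ k : ℕ, MvPowerSeries.coeff (R := ℝ) β (zk k * π ^ k * π''))
          - (∑ᶠ l : ℕ, ((l.factorial : ℝ))⁻¹ *
              MvPowerSeries.coeff (R := ℝ) β (π ^ l * Dzero^[l] c))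
          + ξ * MvPowerSeries.coeff (R := ℝ) β 1 :=
  stmt_9_general π π'' c
end
end

section
/- Closedness under composition (first part of Lemma 7.2): Let {π⁽ⁿ⁾}_{n ∈ ℕ²} and {π'⁽ⁿ⁾}_{n ∈ ℕ²} be families in ℝ[[z_k,z_n]] satisfying the population condition, with associated re-expansion maps Γ* and Γ'*. Then the family π̃⁽ⁿ⁾ := π⁽ⁿ⁾ + Γ*(π'⁽ⁿ⁾) again satisfies the population condition π̃⁽ⁿ⁾_β = 0 unless |n| < |β|, and its associated re-expansion map Γ̃* equals the composition Γ* ∘ Γ'*. -/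
open MvPowerSeries

noncomputable section

/-- Row-finiteness of a matrix indexed by pairs of multi-indices. -/
def RowFinite (Γ : MIdx → MIdx → ℝ) : Prop := ∀ β : MIdx, {γ : MIdx | Γ β γ ≠ 0}.Finite

/-- The linear map induced componentwise by a (row-finite) matrix. -/
def applyG (Γ : MIdx → MIdx → ℝ) (π : FPS) : FPS := fun β =>
  ∑ᶠ γ : MIdx, Γ β γ * MvPowerSeries.coeff (R := ℝ) γ π

/-- The prescribed image of `z_k`: `Σ_{l≥0} (k+l choose k) q^l z_{k+l}`, defined
componentwise (only finitely many `l` contribute to each component). -/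
def gammaZk (q : FPS) (k : ℕ) : FPS := fun β =>
  ∑ᶠ l : ℕ, (((k + l).choose k : ℝ)) * MvPowerSeries.coeff (R := ℝ) β (q ^ l * zk (k + l))

/-- The population condition `π⁽ⁿ⁾_β = 0 unless |n| < |β|`. -/
def PopCond (α : ℝ) (pin : ℕ × ℕ → FPS) : Prop :=
  ∀ (n : ℕ × ℕ) (β : MIdx),
    MvPowerSeries.coeff (R := ℝ) β (pin n) ≠ 0 → ((n.1 : ℝ) + 2 * n.2) < hom α β

/-- `Γ` is the re-expansion matrix associated to the family `{π⁽ⁿ⁾}_{n ∈ ℕ²}`: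
row-finite, the induced map is a unital algebra endomorphism, and it maps the
coordinates `z_k`, `z_n` as prescribed. -/
def IsReExpansion (pin : ℕ × ℕ → FPS) (Γ : MIdx → MIdx → ℝ) : Prop :=
  RowFinite Γ ∧
  (∀ π π' : FPS, applyG Γ (π * π') = applyG Γ π * applyG Γ π') ∧
  applyG Γ 1 = 1 ∧
  (∀ k : ℕ, applyG Γ (zk k) = gammaZk (pin (0, 0)) k) ∧
  (∀ n : Pos2, applyG Γ (zn n) = zn n + pin n.val)

/-!
Put `w(β) := |β| - α`. It is additive in `β`, `w(e_k) = α k`, `w(e_n) = |n| - α`, and the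
population condition says that `π⁽ⁿ⁾` lives in weights `> |n| - α`. Hence `Γ*` maps every variable,
and by multiplicativity every monomial `z^γ`, to a series living in weights `≥ w(γ)`: a nonzero
entry `(Γ*)_β^γ` forces `|γ| ≤ |β|`, which gives the population condition for `π⁽ⁿ⁾ + Γ*π'⁽ⁿ⁾`.

The matrix product of `Γ*` and `Γ'*` is row-finite and induces `Γ* ∘ Γ'*`, an algebra endomorphism
sending `z_n` to `z_n + π⁽ⁿ⁾ + Γ*π'⁽ⁿ⁾`. Since `Γ*` commutes with coefficientwise finite sums,
`Γ*Γ'* z_k = Σ_{l,m} C(k+l,k) C(k+l+m,k+l) (Γ*π'⁽⁰⁾)^l (π⁽⁰⁾)^m z_{k+l+m}`; grouping by `j = l + m`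
with `C(k+l,k) C(k+l+m,k+l) = C(k+j,k) C(j,l)` and the binomial theorem turn this into
`Σ_j C(k+j,k) (π⁽⁰⁾ + Γ*π'⁽⁰⁾)^j z_{k+j}`.
-/

open MvPowerSeries Finset Function

section MatrixAction

variable {ι κ : Type*} {Γ Γ' : MIdx → MIdx → ℝ}

lemma exists_ne_zero_of_finsum_ne_zero {M : Type*} [AddCommMonoid M] {f : ι → M}
    (h : ∑ᶠ i, f i ≠ 0) : ∃ i, f i ≠ 0 := by
  by_contra! hf
  exact h (finsum_eq_zero_of_forall_eq_zero hf)

lemma coeff_applyG (Γ : MIdx → MIdx → ℝ) (π : FPS) (β : MIdx) :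
    coeff β (applyG Γ π) = ∑ᶠ γ, Γ β γ * coeff γ π := rfl

lemma RowFinite.coeff_applyG_eq_sum (hΓ : RowFinite Γ) (π : FPS) (β : MIdx) :
    coeff β (applyG Γ π) = ∑ γ ∈ (hΓ β).toFinset, Γ β γ * coeff γ π :=
  finsum_eq_sum_of_support_subset _ fun _ hγ => (hΓ β).mem_toFinset.2 (left_ne_zero_of_mul hγ)

lemma exists_ne_zero_of_coeff_applyG_ne_zero {π : FPS} {β : MIdx}
    (h : coeff β (applyG Γ π) ≠ 0) : ∃ γ, Γ β γ ≠ 0 ∧ coeff γ π ≠ 0 := by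
  obtain ⟨γ, hγ⟩ := exists_ne_zero_of_finsum_ne_zero h
  exact ⟨γ, left_ne_zero_of_mul hγ, right_ne_zero_of_mul hγ⟩

lemma coeff_applyG_monomial (Γ : MIdx → MIdx → ℝ) (β γ : MIdx) :
    coeff β (applyG Γ (monomial γ 1)) = Γ β γ := by
  rw [coeff_applyG, finsum_eq_single _ γ fun δ hδ => by rw [coeff_monomial_ne hδ, mul_zero],
    coeff_monomial_same, mul_one]

lemma RowFinite.applyG_add (hΓ : RowFinite Γ) (π π' : FPS) :
    applyG Γ (π + π') = applyG Γ π + applyG Γ π' := by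
  ext β
  simp only [map_add, hΓ.coeff_applyG_eq_sum, mul_add, sum_add_distrib]

lemma sum_mul_coeff_of_eq_finsum {F : ι → FPS} {G : FPS} (a : ι → ℝ)
    (hF : ∀ γ, HasFiniteSupport fun i => coeff γ (F i))
    (hG : ∀ γ, coeff γ G = ∑ᶠ i, a i * coeff γ (F i)) (s : Finset κ) (c : κ → ℝ) (g : κ → MIdx) :
    ∑ x ∈ s, c x * coeff (g x) G = ∑ᶠ i, a i * ∑ x ∈ s, c x * coeff (g x) (F i) := by
  have hfin : ∀ x, HasFiniteSupport fun i => a i * coeff (g x) (F i) := fun x =>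
    (hF (g x)).subset fun i hi => right_ne_zero_of_mul hi
  calc ∑ x ∈ s, c x * coeff (g x) G
      = ∑ x ∈ s, ∑ᶠ i, c x * (a i * coeff (g x) (F i)) :=
        sum_congr rfl fun x _ => by rw [hG, mul_finsum' _ _ (hfin x)]
    _ = ∑ᶠ i, ∑ x ∈ s, c x * (a i * coeff (g x) (F i)) :=
        sum_finsum_comm _ _ fun x _ => (hfin x).subset fun i hi => right_ne_zero_of_mul hi
    _ = ∑ᶠ i, a i * ∑ x ∈ s, c x * coeff (g x) (F i) :=
        finsum_congr fun i => by rw [mul_sum]; exact sum_congr rfl fun x _ => by ring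

lemma RowFinite.coeff_applyG_of_eq_finsum (hΓ : RowFinite Γ) {F : ι → FPS} {G : FPS}
    (a : ι → ℝ) (hF : ∀ γ, HasFiniteSupport fun i => coeff γ (F i))
    (hG : ∀ γ, coeff γ G = ∑ᶠ i, a i * coeff γ (F i)) (β : MIdx) :
    coeff β (applyG Γ G) = ∑ᶠ i, a i * coeff β (applyG Γ (F i)) := by
  simp only [hΓ.coeff_applyG_eq_sum]
  exact sum_mul_coeff_of_eq_finsum a hF hG _ _ _

lemma coeff_mul_of_eq_finsum (π : FPS) {F : ι → FPS} {G : FPS}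
    (a : ι → ℝ) (hF : ∀ γ, HasFiniteSupport fun i => coeff γ (F i))
    (hG : ∀ γ, coeff γ G = ∑ᶠ i, a i * coeff γ (F i)) (β : MIdx) :
    coeff β (π * G) = ∑ᶠ i, a i * coeff β (π * F i) := by
  classical
  simp only [coeff_mul]
  exact sum_mul_coeff_of_eq_finsum a hF hG _ _ _

def matMul (Γ Γ' : MIdx → MIdx → ℝ) (β γ : MIdx) : ℝ := ∑ᶠ δ, Γ β δ * Γ' δ γ

lemma RowFinite.matMul_eq_sum (hΓ : RowFinite Γ) (Γ' : MIdx → MIdx → ℝ) (β γ : MIdx) :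
    matMul Γ Γ' β γ = ∑ δ ∈ (hΓ β).toFinset, Γ β δ * Γ' δ γ :=
  finsum_eq_sum_of_support_subset _ fun _ hδ => (hΓ β).mem_toFinset.2 (left_ne_zero_of_mul hδ)

lemma rowFinite_matMul (hΓ : RowFinite Γ) (hΓ' : RowFinite Γ') : RowFinite (matMul Γ Γ') := by
  intro β
  refine ((hΓ β).biUnion fun δ _ => hΓ' δ).subset fun γ hγ => ?_
  rw [Set.mem_ofPred_eq, hΓ.matMul_eq_sum] at hγ
  obtain ⟨δ, -, hδ⟩ := exists_ne_zero_of_sum_ne_zero hγ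
  exact Set.mem_biUnion (left_ne_zero_of_mul hδ) (right_ne_zero_of_mul hδ)

lemma applyG_matMul (hΓ : RowFinite Γ) (hΓ' : RowFinite Γ') (π : FPS) :
    applyG (matMul Γ Γ') π = applyG Γ (applyG Γ' π) := by
  ext β
  have hF : ∀ δ, HasFiniteSupport fun γ => coeff δ (applyG Γ' (monomial γ 1)) := fun δ => by
    simp only [coeff_applyG_monomial]
    exact hΓ' δ
  have hG : ∀ δ, coeff δ (applyG Γ' π) =
      ∑ᶠ γ, coeff γ π * coeff δ (applyG Γ' (monomial γ 1)) := fun δ =>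
    finsum_congr fun γ => by rw [coeff_applyG_monomial, mul_comm]
  rw [hΓ.coeff_applyG_eq_sum, sum_mul_coeff_of_eq_finsum _ hF hG, coeff_applyG]
  refine finsum_congr fun γ => ?_
  simp only [coeff_applyG_monomial, hΓ.matMul_eq_sum, sum_mul, mul_sum]
  exact sum_congr rfl fun δ _ => by ring

end MatrixAction

section Weight

lemma bracketZ_add (β γ : MIdx) : bracketZ (β + γ) = bracketZ β + bracketZ γ :=
  Finsupp.sum_add_index' (fun _ => by simp) fun _ _ _ => by push_cast; ring

lemma homP_add (β γ : MIdx) : homP (β + γ) = homP β + homP γ :=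
  Finsupp.sum_add_index' (fun _ => by simp) fun _ _ _ => by push_cast; ring

def weight (α : ℝ) : MIdx →+ ℝ where
  toFun β := α * bracketZ β + homP β
  map_zero' := by simp [bracketZ, homP]
  map_add' β γ := by rw [bracketZ_add, homP_add]; push_cast; ring

lemma hom_eq_add_weight (α : ℝ) (β : MIdx) : hom α β = α + weight α β := by
  simp only [hom, weight, AddMonoidHom.coe_mk, ZeroHom.coe_mk]
  ring

lemma weight_single_inl (α : ℝ) (k : ℕ) :
    weight α (Finsupp.single (Sum.inl k) 1) = α * k := by
  simp [weight, bracketZ, homP]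

lemma weight_single_inr (α : ℝ) (n : Pos2) :
    weight α (Finsupp.single (Sum.inr n) 1) = n.val.1 + 2 * n.val.2 - α := by
  simp [weight, bracketZ, homP]
  ring

def WeightGE (α a : ℝ) (π : FPS) : Prop := ∀ β, coeff β π ≠ 0 → a ≤ weight α β

lemma weightGE_one (α : ℝ) : WeightGE α 0 1 := by
  intro β hβ
  rw [coeff_one] at hβ
  split_ifs at hβ with h
  · rw [h, map_zero]
  · exact absurd rfl hβ

namespace WeightGE

variable {α a b : ℝ} {π π' : FPS}

lemma mono (h : WeightGE α a π) (hba : b ≤ a) : WeightGE α b π :=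
  fun β hβ => hba.trans (h β hβ)

lemma add (h : WeightGE α a π) (h' : WeightGE α a π') : WeightGE α a (π + π') := by
  intro β hβ
  rw [map_add] at hβ
  by_cases hπ : coeff β π = 0
  · rw [hπ, zero_add] at hβ
    exact h' β hβ
  · exact h β hπ

lemma mul (h : WeightGE α a π) (h' : WeightGE α b π') : WeightGE α (a + b) (π * π') := by
  classical
  intro β hβ
  rw [coeff_mul] at hβ
  obtain ⟨p, hp, hne⟩ := exists_ne_zero_of_sum_ne_zero hβ
  rw [← mem_antidiagonal.1 hp, map_add]
  exact add_le_add (h p.1 (left_ne_zero_of_mul hne)) (h' p.2 (right_ne_zero_of_mul hne))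

lemma pow (h : WeightGE α a π) (n : ℕ) : WeightGE α (n * a) (π ^ n) := by
  induction n with
  | zero => simpa using weightGE_one α
  | succ n ih => simpa [pow_succ, add_mul] using ih.mul h

end WeightGE

lemma weightGE_X (α : ℝ) (j : Var) : WeightGE α (weight α (Finsupp.single j 1)) (X j) := by
  intro β hβ
  rw [coeff_X] at hβ
  split_ifs at hβ with h
  · rw [h]
  · exact absurd rfl hβ

lemma PopCond.weightGE {α : ℝ} {pin : ℕ × ℕ → FPS} (hpop : PopCond α pin) (n : ℕ × ℕ) :
    WeightGE α (n.1 + 2 * n.2 - α) (pin n) := by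
  intro β hβ
  have := hpop n β hβ
  rw [hom_eq_add_weight] at this
  linarith

end Weight

section GammaZk

lemma exists_forall_apply_inl_eq_zero (β : MIdx) : ∃ N, ∀ i, N ≤ i → β (Sum.inl i) = 0 := by
  refine ⟨β.support.sup (Sum.elim (· + 1) fun _ => 0), fun i hi => ?_⟩
  by_contra h
  have := le_sup (f := Sum.elim (· + 1) fun _ => 0) (Finsupp.mem_support_iff.2 h)
  simp only [Sum.elim_inl] at this
  omega

lemma coeff_mul_zk_eq_zero {β : MIdx} {i : ℕ} (h : β (Sum.inl i) = 0) (π : FPS) :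
    coeff β (π * zk i) = 0 := by
  rw [zk, X, coeff_mul_monomial, if_neg]
  rw [Finsupp.single_le_iff, h]
  omega

lemma hasFiniteSupport_coeff_pow_mul_zk (q : FPS) (k : ℕ) (β : MIdx) :
    HasFiniteSupport fun l => coeff β (q ^ l * zk (k + l)) := by
  obtain ⟨N, hN⟩ := exists_forall_apply_inl_eq_zero β
  refine (Set.finite_lt_nat N).subset fun l hl => ?_
  by_contra h
  exact hl (coeff_mul_zk_eq_zero (hN _ (by simp only [Set.mem_ofPred_eq] at h; omega)) _)

lemma coeff_gammaZk (q : FPS) (k : ℕ) (β : MIdx) :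
    coeff β (gammaZk q k) = ∑ᶠ l, ((k + l).choose k : ℝ) * coeff β (q ^ l * zk (k + l)) := rfl

lemma RowFinite.coeff_applyG_gammaZk {Γ : MIdx → MIdx → ℝ} (hΓ : RowFinite Γ) (q : FPS)
    (k : ℕ) (β : MIdx) : coeff β (applyG Γ (gammaZk q k)) =
      ∑ᶠ l, ((k + l).choose k : ℝ) * coeff β (applyG Γ (q ^ l * zk (k + l))) :=
  hΓ.coeff_applyG_of_eq_finsum _ (hasFiniteSupport_coeff_pow_mul_zk q k) (coeff_gammaZk q k) β

lemma coeff_mul_gammaZk (π q : FPS) (k : ℕ) (β : MIdx) : coeff β (π * gammaZk q k) =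
    ∑ᶠ l, ((k + l).choose k : ℝ) * coeff β (π * (q ^ l * zk (k + l))) :=
  coeff_mul_of_eq_finsum π _ (hasFiniteSupport_coeff_pow_mul_zk q k) (coeff_gammaZk q k) β

lemma weightGE_gammaZk {α : ℝ} {q : FPS} (hq : WeightGE α (-α) q) (k : ℕ) :
    WeightGE α (α * k) (gammaZk q k) := by
  intro β hβ
  obtain ⟨l, hl⟩ := exists_ne_zero_of_finsum_ne_zero hβ
  have := (hq.pow l).mul (weightGE_X α (Sum.inl (k + l))) β (right_ne_zero_of_mul hl)
  rw [weight_single_inl] at this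
  push_cast at this
  linarith

end GammaZk

lemma Nat.choose_mul_choose_add (k l m : ℕ) :
    (k + l).choose k * (k + l + m).choose (k + l) = (k + l + m).choose k * (l + m).choose l := by
  rw [mul_comm, Nat.choose_mul (by omega), show k + l + m - k = l + m by omega,
    show k + l - k = l by omega]

lemma sum_range_sum_antidiagonal_eq_sum_product {M : Type*} [AddCommMonoid M] {f : ℕ × ℕ → M}
    {N : ℕ} (hf : ∀ p : ℕ × ℕ, N ≤ p.1 + p.2 → f p = 0) :
    ∑ j ∈ range N, ∑ p ∈ antidiagonal j, f p = ∑ p ∈ range N ×ˢ range N, f p := by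
  have hdisj : (range N : Set ℕ).PairwiseDisjoint antidiagonal := fun i _ j _ hij =>
    disjoint_left.2 fun p hi hj => hij ((mem_antidiagonal.1 hi).symm.trans (mem_antidiagonal.1 hj))
  rw [← sum_biUnion hdisj]
  refine sum_subset (fun p hp => ?_) fun p _ hp => hf p ?_
  · obtain ⟨j, hj, hpj⟩ := mem_biUnion.1 hp
    simp only [HasAntidiagonal.mem_antidiagonal, mem_range, mem_product] at hj hpj ⊢
    omega
  · by_contra! h
    exact hp (mem_biUnion.2 ⟨p.1 + p.2, mem_range.2 h, mem_antidiagonal.2 rfl⟩)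

lemma finsum_finsum_eq_finsum_sum_antidiagonal {M : Type*} [AddCommMonoid M] {f : ℕ → ℕ → M}
    {N : ℕ} (hf : ∀ l m, N ≤ l + m → f l m = 0) :
    ∑ᶠ l, ∑ᶠ m, f l m = ∑ᶠ j, ∑ p ∈ antidiagonal j, f p.1 p.2 := by
  have hrange : ∀ g : ℕ → M, (∀ n, N ≤ n → g n = 0) → ∑ᶠ n, g n = ∑ n ∈ range N, g n :=
    fun g hg => finsum_eq_sum_of_support_subset _ fun n hn => by
      by_contra h
      exact hn (hg n (by simpa using h))
  have hrow : ∀ l, ∑ᶠ m, f l m = ∑ m ∈ range N, f l m := fun l =>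
    hrange _ fun m hm => hf l m (by omega)
  calc ∑ᶠ l, ∑ᶠ m, f l m = ∑ l ∈ range N, ∑ m ∈ range N, f l m := by
        rw [finsum_congr hrow]
        exact hrange _ fun l hl => sum_eq_zero fun m _ => hf l m (by omega)
    _ = ∑ j ∈ range N, ∑ p ∈ antidiagonal j, f p.1 p.2 := by
        rw [← sum_product', sum_range_sum_antidiagonal_eq_sum_product fun p hp => hf _ _ hp]
    _ = ∑ᶠ j, ∑ p ∈ antidiagonal j, f p.1 p.2 := by
        refine (hrange _ fun j hj => sum_eq_zero fun p hp => hf _ _ ?_).symm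
        rwa [mem_antidiagonal.1 hp]

namespace IsReExpansion

variable {α : ℝ} {pin pin' : ℕ × ℕ → FPS} {Γ Γ' : MIdx → MIdx → ℝ}

lemma rowFinite (hΓ : IsReExpansion pin Γ) : RowFinite Γ := hΓ.1

lemma map_mul (hΓ : IsReExpansion pin Γ) (π π' : FPS) :
    applyG Γ (π * π') = applyG Γ π * applyG Γ π' := hΓ.2.1 π π'

lemma map_one (hΓ : IsReExpansion pin Γ) : applyG Γ 1 = 1 := hΓ.2.2.1

lemma map_zk (hΓ : IsReExpansion pin Γ) (k : ℕ) : applyG Γ (zk k) = gammaZk (pin (0, 0)) k :=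
  hΓ.2.2.2.1 k

lemma map_zn (hΓ : IsReExpansion pin Γ) (n : Pos2) : applyG Γ (zn n) = zn n + pin n.val :=
  hΓ.2.2.2.2 n

lemma map_pow (hΓ : IsReExpansion pin Γ) (π : FPS) (n : ℕ) :
    applyG Γ (π ^ n) = applyG Γ π ^ n := by
  induction n with
  | zero => exact hΓ.map_one
  | succ n ih => rw [pow_succ, hΓ.map_mul, ih, pow_succ]

lemma weightGE_map_X (hΓ : IsReExpansion pin Γ) (hpop : PopCond α pin) (j : Var) :
    WeightGE α (weight α (Finsupp.single j 1)) (applyG Γ (X j)) := by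
  cases j with
  | inl k =>
    rw [weight_single_inl, ← zk, hΓ.map_zk]
    exact weightGE_gammaZk ((hpop.weightGE (0, 0)).mono (by simp)) k
  | inr n =>
    have hzn := weightGE_X α (Sum.inr n)
    rw [weight_single_inr] at hzn ⊢
    rw [← zn, hΓ.map_zn]
    exact hzn.add (hpop.weightGE n.val)

lemma weightGE_map_monomial (hΓ : IsReExpansion pin Γ) (hpop : PopCond α pin) (γ : MIdx) :
    WeightGE α (weight α γ) (applyG Γ (monomial γ 1)) := by
  induction γ using Finsupp.induction with
  | zero => simpa [hΓ.map_one] using weightGE_one α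
  | single_add j m γ _ _ ih =>
    have hsplit : (monomial (Finsupp.single j m + γ) 1 : FPS) = X j ^ m * monomial γ 1 := by
      rw [X_pow_eq, monomial_mul_monomial, one_mul]
    rw [hsplit, hΓ.map_mul, hΓ.map_pow, map_add,
      show Finsupp.single j m = m • Finsupp.single j 1 by simp, map_nsmul, nsmul_eq_mul]
    exact ((hΓ.weightGE_map_X hpop j).pow m).mul ih

lemma hom_le_of_ne_zero (hΓ : IsReExpansion pin Γ) (hpop : PopCond α pin) {β γ : MIdx}
    (h : Γ β γ ≠ 0) : hom α γ ≤ hom α β := by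
  rw [← coeff_applyG_monomial Γ β γ] at h
  rw [hom_eq_add_weight, hom_eq_add_weight]
  exact add_le_add_right (hΓ.weightGE_map_monomial hpop γ β h) α

lemma applyG_gammaZk (hΓ : IsReExpansion pin Γ) (q' : FPS) (k : ℕ) :
    applyG Γ (gammaZk q' k) = gammaZk (pin (0, 0) + applyG Γ q') k := by
  ext β
  set t : ℕ → ℕ → ℝ := fun l m => coeff β (applyG Γ q' ^ l * pin (0, 0) ^ m * zk (k + l + m))
  obtain ⟨N, hN⟩ := exists_forall_apply_inl_eq_zero β
  have ht : ∀ l m, N ≤ l + m → t l m = 0 := fun l m h =>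
    coeff_mul_zk_eq_zero (hN _ (by omega)) _
  have hbinom : ∀ j, coeff β ((applyG Γ q' + pin (0, 0)) ^ j * zk (k + j)) =
      ∑ p ∈ antidiagonal j, (j.choose p.1 : ℝ) * t p.1 p.2 := by
    intro j
    rw [(Commute.all _ _).add_pow', sum_mul, map_sum]
    refine sum_congr rfl fun p hp => ?_
    rw [smul_mul_assoc, map_nsmul, nsmul_eq_mul, ← mem_antidiagonal.1 hp, ← add_assoc]
  calc coeff β (applyG Γ (gammaZk q' k))
      = ∑ᶠ l, ((k + l).choose k : ℝ) * ∑ᶠ m, ((k + l + m).choose (k + l) : ℝ) * t l m := by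
        rw [hΓ.rowFinite.coeff_applyG_gammaZk]
        refine finsum_congr fun l => ?_
        rw [hΓ.map_mul, hΓ.map_pow, hΓ.map_zk, coeff_mul_gammaZk]
        simp only [t, mul_assoc]
    _ = ∑ᶠ l, ∑ᶠ m, ((k + l + m).choose k * (l + m).choose l : ℝ) * t l m := by
        refine finsum_congr fun l => ?_
        have hfin : HasFiniteSupport (t l) := (Set.finite_lt_nat (N - l)).subset fun m hm => by
          by_contra h
          exact hm (ht l m (by simp only [Set.mem_ofPred_eq] at h; omega))
        rw [mul_finsum' _ _ (hfin.subset fun m hm => right_ne_zero_of_mul hm)]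
        refine finsum_congr fun m => ?_
        rw [← mul_assoc, ← Nat.cast_mul, Nat.choose_mul_choose_add, Nat.cast_mul]
    _ = ∑ᶠ j, ∑ p ∈ antidiagonal j, ((k + j).choose k * j.choose p.1 : ℝ) * t p.1 p.2 := by
        rw [finsum_finsum_eq_finsum_sum_antidiagonal fun l m h => by rw [ht l m h, mul_zero]]
        refine finsum_congr fun j => sum_congr rfl fun p hp => ?_
        rw [← mem_antidiagonal.1 hp, ← add_assoc]
    _ = coeff β (gammaZk (pin (0, 0) + applyG Γ q') k) := by
        rw [coeff_gammaZk, add_comm (pin (0, 0))]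
        refine finsum_congr fun j => ?_
        rw [hbinom, mul_sum]
        exact sum_congr rfl fun p _ => by ring

lemma comp (hΓ : IsReExpansion pin Γ) (hΓ' : IsReExpansion pin' Γ') :
    IsReExpansion (fun n => pin n + applyG Γ (pin' n)) (matMul Γ Γ') := by
  have hcomp := applyG_matMul hΓ.rowFinite hΓ'.rowFinite
  refine ⟨rowFinite_matMul hΓ.rowFinite hΓ'.rowFinite, fun π π' => ?_, ?_, fun k => ?_, fun n => ?_⟩
  · rw [hcomp, hcomp, hcomp, hΓ'.map_mul, hΓ.map_mul]
  · rw [hcomp, hΓ'.map_one, hΓ.map_one]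
  · rw [hcomp, hΓ'.map_zk, hΓ.applyG_gammaZk]
  · rw [hcomp, hΓ'.map_zn, hΓ.rowFinite.applyG_add, hΓ.map_zn, add_assoc]

end IsReExpansion

lemma popCond_add_applyG {α : ℝ} {pin pin' : ℕ × ℕ → FPS} {Γ : MIdx → MIdx → ℝ}
    (hΓ : IsReExpansion pin Γ) (hpop : PopCond α pin) (hpop' : PopCond α pin') :
    PopCond α (fun n => pin n + applyG Γ (pin' n)) := by
  intro n β hβ
  rw [map_add] at hβ
  by_cases hpin : coeff β (pin n) = 0
  · rw [hpin, zero_add] at hβ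
    obtain ⟨γ, hΓβγ, hγ⟩ := exists_ne_zero_of_coeff_applyG_ne_zero hβ
    exact (hpop' n γ hγ).trans_le (hΓ.hom_le_of_ne_zero hpop hΓβγ)
  · exact hpop n β hpin

theorem stmt_14_general (α : ℝ)
    (pin pin' : ℕ × ℕ → FPS) (hpop : PopCond α pin) (hpop' : PopCond α pin')
    (Γ Γ' : MIdx → MIdx → ℝ) (hΓ : IsReExpansion pin Γ) (hΓ' : IsReExpansion pin' Γ') :
    PopCond α (fun n => pin n + applyG Γ (pin' n)) ∧
    ∃ Γt : MIdx → MIdx → ℝ,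
      IsReExpansion (fun n => pin n + applyG Γ (pin' n)) Γt ∧
      ∀ π : FPS, applyG Γt π = applyG Γ (applyG Γ' π) :=
  ⟨popCond_add_applyG hΓ hpop hpop', matMul Γ Γ', hΓ.comp hΓ',
    applyG_matMul hΓ.rowFinite hΓ'.rowFinite⟩

/-- Closedness under composition (first part of Lemma 7.2): the family
`π̃⁽ⁿ⁾ := π⁽ⁿ⁾ + Γ*(π'⁽ⁿ⁾)` again satisfies the population condition, and its
associated re-expansion map equals the composition `Γ* ∘ Γ'*`. -/
theorem stmt_14 (α : ℝ) (hα0 : 0 < α) (hα1 : α < 1)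
    (pin pin' : ℕ × ℕ → FPS) (hpop : PopCond α pin) (hpop' : PopCond α pin')
    (Γ Γ' : MIdx → MIdx → ℝ) (hΓ : IsReExpansion pin Γ) (hΓ' : IsReExpansion pin' Γ') :
    PopCond α (fun n => pin n + applyG Γ (pin' n)) ∧
    ∃ Γt : MIdx → MIdx → ℝ,
      IsReExpansion (fun n => pin n + applyG Γ (pin' n)) Γt ∧
      ∀ π : FPS, applyG Γt π = applyG Γ (applyG Γ' π) :=
  stmt_14_general α pin pin' hpop hpop' Γ Γ' hΓ hΓ'
end
end

section
/- Annealed equivalence of norms for random anisotropic polynomials (the 'three-point argument' ingredient in the proof of Lemma 7.3): Let η > 0, 1 ≤ p < ∞, r > 0 and x ∈ ℝ². For each n = (n₁,n₂) ∈ ℕ² with |n| := n₁ + 2n₂ < η, let c_n : Ω → ℝ be p-integrable. Then max over n with |n| < η of r^{|n|} E^{1/p}|c_n|^p ≤ C · (1/|B_r(x)|) ∫_{B_r(x)} E^{1/p}| Σ_{n: |n|<η} c_n (z₁−x₁)^{n₁}(z₂−x₂)^{n₂} |^p dz, where B_r(x) := {z ∈ ℝ² : ((z₁−x₁)⁴ +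 (z₂−x₂)²)^{1/4} ≤ r} is the parabolic ball, |B_r(x)| its Lebesgue measure, and the constant C depends only on η and p (in particular not on r, x, or the c_n). -/
open MeasureTheory
open scoped ENNReal

noncomputable section

/-- Space-time ℝ², with the Euclidean (inner product) structure needed for the
Fourier transform. -/
abbrev E2 : Type := EuclideanSpace ℝ (Fin 2)

/-- The parabolic (Carnot–Carathéodory) quasi-norm `|z| = (z₁⁴ + z₂²)^{1/4}`. -/
def pnorm (z : E2) : ℝ := ((z 0) ^ 4 + (z 1) ^ 2) ^ ((1 : ℝ) / 4)

/-- Partial derivative in the `i`-th coordinate direction. -/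
def pd (i : Fin 2) (g : E2 → ℝ) : E2 → ℝ := fun z => fderiv ℝ g z (EuclideanSpace.single i 1)

/-- Iterated partial derivatives `∂^n = ∂₁^{n₁} ∂₂^{n₂}`. -/
def pdN (n : ℕ × ℕ) (g : E2 → ℝ) : E2 → ℝ := (pd 0)^[n.1] ((pd 1)^[n.2] g)

/-- `ψ` has, at each time `t > 0`, the Fourier transform `q ↦ exp(−t(q₁⁴ + q₂²))`. -/
def HasKernelFT (ψ : ℝ → SchwartzMap E2 ℝ) : Prop :=
  ∀ t : ℝ, 0 < t → ∀ q : E2,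
    VectorFourier.fourierIntegral Real.fourierChar volume (innerₗ E2) (fun z => ((ψ t z : ℝ) : ℂ)) q
      = ((Real.exp (-t * ((q 0) ^ 4 + (q 1) ^ 2)) : ℝ) : ℂ)

/-!
The parabolic dilation `y ↦ x + (r y₀, r² y₁)` maps the unit parabolic ball onto `B_r(x)`,
multiplies volumes by `r³` and turns the coefficient `c_n` into `r^{|n|} c_n`, so it suffices to
take `r = 1` and `x = 0`. On the unit ball the monomials are linearly independent in `L²`, since a
polynomial vanishing on the open square `(-1/2, 1/2)²` is zero. Their Gram matrix is therefore
invertible, and inverting it gives dual polynomials `w_n` with `∫_{B_1} w_n y^m dy = δ_{nm}`.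
Hence `c_n = ∫_{B_1} w_n(y) Q(y) dy` for the `Lᵖ(Ω)`-valued polynomial `Q = Σ c_m y^m`, and
`‖c_n‖ ≤ (sup |w_n|) ∫_{B_1} ‖Q‖`.
-/

namespace AnnealedNorms

open Matrix Set

section Biorthogonal

variable {α ι : Type*} [MeasurableSpace α] [Fintype ι]

theorem integral_sum_mul_eq_vecMul_gram (μ : Measure α) (φ : ι → α → ℝ)
    (hφ : ∀ i j, Integrable (fun x => φ i x * φ j x) μ) (u : ι → ℝ) (j : ι) :
    ∫ x, (∑ k, u k * φ k x) * φ j x ∂μ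
      = (u ᵥ* Matrix.of fun k l => ∫ x, φ k x * φ l x ∂μ) j := by
  simp only [Finset.sum_mul, mul_assoc]
  rw [integral_finsetSum _ fun k _ => (hφ k j).const_mul (u k)]
  simp only [integral_const_mul, vecMul, dotProduct, of_apply]

theorem exists_biorthogonal [DecidableEq ι] (μ : Measure α) (φ : ι → α → ℝ)
    (hφ : ∀ i j, Integrable (fun x => φ i x * φ j x) μ)
    (hφ_indep : ∀ u : ι → ℝ, (∀ᵐ x ∂μ, ∑ i, u i * φ i x = 0) → u = 0) :
    ∃ w : Matrix ι ι ℝ,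
      ∀ i j, ∫ x, (∑ k, w i k * φ k x) * φ j x ∂μ = (1 : Matrix ι ι ℝ) i j := by
  set G : Matrix ι ι ℝ := Matrix.of fun k l => ∫ x, φ k x * φ l x ∂μ
  have hker : ∀ u, u ᵥ* G = 0 → u = 0 := by
    intro u hu
    have hint : ∀ j, Integrable (fun x => u j * ((∑ k, u k * φ k x) * φ j x)) μ := by
      intro j
      simp only [Finset.sum_mul, Finset.mul_sum, mul_assoc]
      exact integrable_finsetSum _ fun k _ => ((hφ k j).const_mul (u k)).const_mul (u j)
    have hsq_eq : ∀ x,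
        (∑ k, u k * φ k x) ^ 2 = ∑ j, u j * ((∑ k, u k * φ k x) * φ j x) := by
      intro x
      rw [sq, Finset.mul_sum]
      exact Finset.sum_congr rfl fun j _ => by ring
    have hsq_int : Integrable (fun x => (∑ k, u k * φ k x) ^ 2) μ := by
      simp_rw [hsq_eq]
      exact integrable_finsetSum _ fun j _ => hint j
    have hsq : ∫ x, (∑ k, u k * φ k x) ^ 2 ∂μ = 0 := calc
      _ = ∑ j, u j * (u ᵥ* G) j := by
        simp_rw [hsq_eq]
        rw [integral_finsetSum _ fun j _ => hint j]
        simp only [integral_const_mul, integral_sum_mul_eq_vecMul_gram μ φ hφ, G]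
      _ = 0 := by simp [hu]
    refine hφ_indep u ?_
    filter_upwards [(integral_eq_zero_iff_of_nonneg (fun x => sq_nonneg _) hsq_int).mp hsq]
      with x hx using pow_eq_zero_iff two_ne_zero |>.mp hx
  have hG : Function.Injective G.vecMul := fun u v h =>
    sub_eq_zero.mp (hker _ (by rw [sub_vecMul]; exact sub_eq_zero.mpr h))
  obtain ⟨W, hW⟩ := (vecMul_injective_iff_isUnit.mp hG).exists_left_inv
  refine ⟨W, fun i j => ?_⟩
  rw [integral_sum_mul_eq_vecMul_gram μ φ hφ, ← hW]
  rfl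

theorem exists_norm_le_integral_norm_sum [TopologicalSpace α] [T2Space α]
    [OpensMeasurableSpace α] (μ : Measure α) [IsFiniteMeasureOnCompacts μ] {K : Set α}
    (hK : IsCompact K) (φ : ι → α → ℝ) (hφ : ∀ i, ContinuousOn (φ i) K)
    (hφ_indep : ∀ u : ι → ℝ,
      (∀ᵐ x ∂μ.restrict K, ∑ i, u i * φ i x = 0) → u = 0) :
    ∃ C, 0 < C ∧ ∀ {X : Type*} [NormedAddCommGroup X] [NormedSpace ℝ X] [CompleteSpace X]
      (F : ι → X) (i : ι), ‖F i‖ ≤ C * ∫ x in K, ‖∑ j, φ j x • F j‖ ∂μ := by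
  classical
  obtain ⟨w, hw⟩ := exists_biorthogonal (μ.restrict K) φ
    (fun i j => ((hφ i).mul (hφ j)).integrableOn_compact hK) hφ_indep
  set ψ : α → ι → ℝ := fun x i => ∑ k, w i k * φ k x
  have hψ : ContinuousOn ψ K := continuousOn_pi.mpr fun i =>
    continuousOn_finsetSum _ fun k _ => continuousOn_const.mul (hφ k)
  obtain ⟨M, hM⟩ := hK.exists_bound_of_continuousOn hψ
  refine ⟨max M 1, by positivity, fun {X} _ _ _ F i => ?_⟩
  set Q : α → X := fun x => ∑ j, φ j x • F j
  have hQ : ContinuousOn Q K :=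
    continuousOn_finsetSum _ fun j _ => (hφ j).smul continuousOn_const
  have hψi : ContinuousOn (fun x => ψ x i) K := (continuous_apply i).comp_continuousOn hψ
  have hrepr : ∫ x in K, ψ x i • Q x ∂μ = F i := by
    simp only [Q, Finset.smul_sum, smul_smul]
    rw [integral_finsetSum _ fun j _ => ContinuousOn.integrableOn_compact hK
      (f := fun x => (ψ x i * φ j x) • F j) ((hψi.mul (hφ j)).smul continuousOn_const)]
    simp only [integral_smul_const, ψ, hw, one_apply, ite_smul, one_smul, zero_smul,
      Finset.sum_ite_eq, Finset.mem_univ, if_true]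
  calc ‖F i‖ = ‖∫ x in K, ψ x i • Q x ∂μ‖ := by rw [hrepr]
    _ ≤ ∫ x in K, ‖ψ x i • Q x‖ ∂μ := norm_integral_le_integral_norm _
    _ ≤ ∫ x in K, max M 1 * ‖Q x‖ ∂μ := by
      refine setIntegral_mono_on ((hψi.smul hQ).norm.integrableOn_compact hK)
        ((continuousOn_const.mul hQ.norm).integrableOn_compact hK) hK.measurableSet
        fun x hx => ?_
      rw [norm_smul]
      gcongr
      exact (norm_le_pi_norm (ψ x) i).trans ((hM x hx).trans (le_max_left _ _))
    _ = max M 1 * ∫ x in K, ‖Q x‖ ∂μ := integral_const_mul _ _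

end Biorthogonal

theorem eq_zero_of_sum_mul_pow_mul_pow_eq_zero {s : Finset (ℕ × ℕ)} (u : s → ℝ)
    {A : Fin 2 → Set ℝ} (hA : ∀ i, (A i).Infinite)
    (h : ∀ a ∈ univ.pi A, ∑ m : s, u m * (a 0 ^ m.1.1 * a 1 ^ m.1.2) = 0) : u = 0 := by
  classical
  set e : ℕ × ℕ → Fin 2 →₀ ℕ := fun m => Finsupp.single 0 m.1 + Finsupp.single 1 m.2
  have he : Function.Injective e := fun m m' hm =>
    Prod.ext (by simpa [e] using DFunLike.congr_fun hm 0)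
      (by simpa [e] using DFunLike.congr_fun hm 1)
  set P : MvPolynomial (Fin 2) ℝ := ∑ m : s, MvPolynomial.monomial (e m) (u m)
  have hP : P = 0 := by
    refine MvPolynomial.funext_set A hA fun a ha => ?_
    simpa [P, e, MvPolynomial.eval_monomial, Finsupp.prod_add_index', pow_add] using h a ha
  funext m
  simpa [P, MvPolynomial.coeff_sum, MvPolynomial.coeff_monomial, he.eq_iff] using
    congrArg (MvPolynomial.coeff (e m)) hP

def parabolicBall (x : E2) (r : ℝ) : Set E2 := {z | pnorm (z - x) ≤ r}

def parabolicDegree (m : ℕ × ℕ) : ℕ := m.1 + 2 * m.2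

def coordMonomial (m : ℕ × ℕ) (z : E2) : ℝ := z 0 ^ m.1 * z 1 ^ m.2

def parabolicDilation (r : ℝ) : E2 →ₗ[ℝ] E2 := toLpLin 2 2 (diagonal ![r, r ^ 2])

def centralSquare : Set E2 := WithLp.ofLp ⁻¹' univ.pi fun _ => Ioo (-2⁻¹) 2⁻¹

theorem pnorm_le_one_iff (y : E2) : pnorm y ≤ 1 ↔ y 0 ^ 4 + y 1 ^ 2 ≤ 1 := by
  have h := Real.rpow_le_rpow_iff (z := 1 / 4) (by positivity : 0 ≤ y 0 ^ 4 + y 1 ^ 2)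
    zero_le_one (by norm_num)
  rwa [Real.one_rpow] at h

theorem isOpen_centralSquare : IsOpen centralSquare :=
  (isOpen_set_pi finite_univ fun _ _ => isOpen_Ioo).preimage (PiLp.continuous_ofLp 2 _)

theorem centralSquare_subset_parabolicBall : centralSquare ⊆ parabolicBall 0 1 := by
  intro y hy
  simp only [centralSquare, mem_preimage, mem_univ_pi, mem_Ioo] at hy
  obtain ⟨⟨h0, h0'⟩, h1, h1'⟩ := And.intro (hy 0) (hy 1)
  rw [parabolicBall, mem_ofPred_eq, sub_zero, pnorm_le_one_iff]
  have h0sq : y 0 ^ 2 < 4⁻¹ := by nlinarith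
  have h1sq : y 1 ^ 2 < 4⁻¹ := by nlinarith
  nlinarith [sq_nonneg (y 0)]

theorem isCompact_parabolicBall_zero_one : IsCompact (parabolicBall 0 1) := by
  have hclosed : IsClosed (parabolicBall 0 1) := by
    simp only [parabolicBall, sub_zero, pnorm_le_one_iff]
    exact isClosed_le (by fun_prop) continuous_const
  refine (isCompact_closedBall (0 : E2) 2).of_isClosed_subset hclosed fun y hy => ?_
  rw [parabolicBall, mem_ofPred_eq, sub_zero, pnorm_le_one_iff] at hy
  rw [mem_closedBall_zero_iff, EuclideanSpace.norm_eq, Fin.sum_univ_two,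
    Real.sqrt_le_left zero_le_two, Real.norm_eq_abs, Real.norm_eq_abs, sq_abs, sq_abs]
  nlinarith [sq_nonneg (y 0 ^ 2 - 1), sq_nonneg (y 1)]

theorem volume_parabolicBall_zero_one_pos : 0 < volume (parabolicBall 0 1) :=
  (isOpen_centralSquare.measure_pos volume ⟨0, by simp [centralSquare]⟩).trans_le
    (measure_mono centralSquare_subset_parabolicBall)

@[fun_prop]
theorem continuous_coordMonomial (m : ℕ × ℕ) : Continuous (coordMonomial m) := by
  unfold coordMonomial
  fun_prop

theorem eq_zero_of_ae_sum_coordMonomial_eq_zero {s : Finset (ℕ × ℕ)} (u : s → ℝ)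
    (h : ∀ᵐ y ∂volume.restrict (parabolicBall 0 1), ∑ m : s, u m * coordMonomial m y = 0) :
    u = 0 := by
  have hcont : Continuous fun y => ∑ m : s, u m * coordMonomial m y := by fun_prop
  have hsq := Measure.eqOn_open_of_ae_eq
    (ae_restrict_of_ae_restrict_of_subset centralSquare_subset_parabolicBall h)
    isOpen_centralSquare hcont.continuousOn continuousOn_const
  refine eq_zero_of_sum_mul_pow_mul_pow_eq_zero u (A := fun _ => Ioo (-2⁻¹) 2⁻¹)
    (fun _ => Ioo_infinite (by norm_num)) fun a ha => hsq (x := WithLp.toLp 2 a) ?_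
  simpa [centralSquare] using ha

theorem parabolicDilation_apply_zero (r : ℝ) (y : E2) :
    parabolicDilation r y 0 = r * y 0 := by
  simp [parabolicDilation, toLpLin_apply]

theorem parabolicDilation_apply_one (r : ℝ) (y : E2) :
    parabolicDilation r y 1 = r ^ 2 * y 1 := by
  simp [parabolicDilation, toLpLin_apply]

theorem det_parabolicDilation (r : ℝ) : LinearMap.det (parabolicDilation r) = r ^ 3 := by
  rw [parabolicDilation, LinearMap.det_toLpLin, det_diagonal, Fin.prod_univ_two]
  simp only [Fin.isValue, cons_val_zero, cons_val_one, cons_val_fin_one]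
  ring

theorem parabolicDilation_parabolicDilation_inv {r : ℝ} (hr : r ≠ 0) (y : E2) :
    parabolicDilation r (parabolicDilation r⁻¹ y) = y := by
  ext i
  fin_cases i
  · simp [parabolicDilation_apply_zero, hr]
  · simp [parabolicDilation_apply_one, hr]

theorem pnorm_parabolicDilation {r : ℝ} (hr : 0 ≤ r) (y : E2) :
    pnorm (parabolicDilation r y) = r * pnorm y := by
  rw [pnorm, pnorm, parabolicDilation_apply_zero, parabolicDilation_apply_one,
    show (r * y 0) ^ 4 + (r ^ 2 * y 1) ^ 2 = r ^ 4 * (y 0 ^ 4 + y 1 ^ 2) by ring,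
    Real.mul_rpow (by positivity) (by positivity), ← Real.rpow_natCast, ← Real.rpow_mul hr]
  norm_num

theorem coordMonomial_parabolicDilation (m : ℕ × ℕ) (r : ℝ) (y : E2) :
    coordMonomial m (parabolicDilation r y) = r ^ parabolicDegree m * coordMonomial m y := by
  rw [coordMonomial, coordMonomial, parabolicDilation_apply_zero, parabolicDilation_apply_one,
    parabolicDegree]
  ring

theorem image_parabolicBall {r : ℝ} (hr : 0 < r) (x : E2) :
    (fun y => x + parabolicDilation r y) '' parabolicBall 0 1 = parabolicBall x r := by
  ext z
  simp only [parabolicBall, sub_zero, mem_image, mem_ofPred_eq]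
  constructor
  · rintro ⟨y, hy, rfl⟩
    rw [add_sub_cancel_left, pnorm_parabolicDilation hr.le]
    exact mul_le_of_le_one_right hr.le hy
  · intro hz
    refine ⟨parabolicDilation r⁻¹ (z - x), ?_, ?_⟩
    · rwa [pnorm_parabolicDilation (inv_nonneg.mpr hr.le), inv_mul_le_iff₀ hr, mul_one]
    · rw [parabolicDilation_parabolicDilation_inv hr.ne', add_sub_cancel]

theorem setIntegral_parabolicBall {r : ℝ} (hr : 0 < r) (x : E2) (g : E2 → ℝ) :
    ∫ z in parabolicBall x r, g z
      = r ^ 3 * ∫ y in parabolicBall 0 1, g (x + parabolicDilation r y) := by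
  have hleft : ∀ y, parabolicDilation r⁻¹ (parabolicDilation r y) = y := fun y => by
    simpa using parabolicDilation_parabolicDilation_inv (inv_ne_zero hr.ne') y
  have hinj : InjOn (fun y => x + parabolicDilation r y) (parabolicBall 0 1) :=
    fun y _ y' _ h => by simpa [hleft] using congrArg (parabolicDilation r⁻¹) (add_left_cancel h)
  have hderiv : ∀ y ∈ parabolicBall 0 1, HasFDerivWithinAt (fun y => x + parabolicDilation r y)
      (LinearMap.toContinuousLinearMap (parabolicDilation r)) (parabolicBall 0 1) y :=
    fun y _ => ((LinearMap.toContinuousLinearMap _).hasFDerivAt.const_add x).hasFDerivWithinAt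
  rw [← image_parabolicBall hr x, integral_image_eq_integral_abs_det_fderiv_smul volume
    isCompact_parabolicBall_zero_one.measurableSet hderiv hinj, ← integral_const_mul]
  simp [ContinuousLinearMap.det, det_parabolicDilation, abs_of_pos hr]

open Pointwise in
theorem volume_parabolicBall {r : ℝ} (hr : 0 < r) (x : E2) :
    volume (parabolicBall x r) = ENNReal.ofReal (r ^ 3) * volume (parabolicBall 0 1) := by
  rw [← image_parabolicBall hr x, show (fun y => x + parabolicDilation r y) '' parabolicBall 0 1
      = x +ᵥ parabolicDilation r '' parabolicBall 0 1 by rw [← image_vadd, image_image]; rfl,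
    measure_vadd, Measure.addHaar_image_linearMap, det_parabolicDilation,
    abs_of_pos (by positivity)]

theorem exists_pow_mul_norm_le_average_norm (s : Finset (ℕ × ℕ)) :
    ∃ C, 0 < C ∧ ∀ {X : Type*} [NormedAddCommGroup X] [NormedSpace ℝ X] [CompleteSpace X]
      (r : ℝ), 0 < r → ∀ (x : E2) (F : s → X) (n : s),
      r ^ parabolicDegree n * ‖F n‖ ≤ C * (volume (parabolicBall x r)).toReal⁻¹ *
        ∫ z in parabolicBall x r, ‖∑ m : s, coordMonomial m (z - x) • F m‖ := by
  obtain ⟨C, hC, hbound⟩ := exists_norm_le_integral_norm_sum volume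
    isCompact_parabolicBall_zero_one (fun m : s => coordMonomial m)
    (fun m => (continuous_coordMonomial m).continuousOn) eq_zero_of_ae_sum_coordMonomial_eq_zero
  set v := (volume (parabolicBall 0 1)).toReal
  have hv : 0 < v := ENNReal.toReal_pos volume_parabolicBall_zero_one_pos.ne'
    isCompact_parabolicBall_zero_one.measure_lt_top.ne
  refine ⟨C * v, by positivity, fun {X} _ _ _ r hr x F n => ?_⟩
  set I := ∫ y in parabolicBall 0 1,
    ‖∑ m : s, coordMonomial m y • r ^ parabolicDegree m • F m‖
  have hbound_n : r ^ parabolicDegree n * ‖F n‖ ≤ C * I := by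
    simpa only [norm_smul, Real.norm_of_nonneg (pow_nonneg hr.le _)] using
      hbound (fun m => r ^ parabolicDegree m • F m) n
  have hI : ∫ z in parabolicBall x r, ‖∑ m : s, coordMonomial m (z - x) • F m‖
      = r ^ 3 * I := by
    simp only [setIntegral_parabolicBall hr, add_sub_cancel_left,
      coordMonomial_parabolicDilation, smul_smul, mul_comm, I]
  rw [volume_parabolicBall hr, ENNReal.toReal_mul, ENNReal.toReal_ofReal (by positivity), hI]
  calc _ ≤ C * I := hbound_n
    _ = C * v * (r ^ 3 * v)⁻¹ * (r ^ 3 * I) := by field_simp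

section Lp

variable {Ω ι : Type*} [MeasurableSpace Ω] {P : Measure Ω} {q : ℝ≥0∞}

theorem sum_toLp (t : Finset ι) {f : ι → Ω → ℝ} (hf : ∀ i, MemLp (f i) q P) :
    ∑ i ∈ t, (hf i).toLp (f i)
      = (memLp_finsetSum' t fun i _ => hf i).toLp (∑ i ∈ t, f i) := by
  classical
  induction t using Finset.induction_on with
  | empty => simp [MemLp.toLp_zero]
  | insert a t ha ih =>
    rw [Finset.sum_insert ha, ih, ← MemLp.toLp_add]
    exact MemLp.toLp_congr _ _ (by rw [Finset.sum_insert ha])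

theorem norm_sum_smul_toLp [Fact (1 ≤ q)] [Fintype ι] (a : ι → ℝ) {f : ι → Ω → ℝ}
    (hf : ∀ i, MemLp (f i) q P) :
    ‖∑ i, a i • (hf i).toLp (f i)‖
      = (eLpNorm (fun ω => ∑ i, a i * f i ω) q P).toReal := by
  simp_rw [← MemLp.toLp_const_smul]
  rw [sum_toLp Finset.univ fun i => (hf i).const_smul (a i), Lp.norm_toLp]
  congr 2
  ext ω
  simp [Finset.sum_apply]

end Lp

theorem finite_setOf_add_two_mul_lt (η : ℝ) :
    {m : ℕ × ℕ | (m.1 : ℝ) + 2 * m.2 < η}.Finite := by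
  refine (finite_Iic (⌈η⌉₊, ⌈η⌉₊)).subset
    fun m (hm : (m.1 : ℝ) + 2 * m.2 < η) => ?_
  have hη : η ≤ ⌈η⌉₊ := Nat.le_ceil η
  have h1 : (0 : ℝ) ≤ m.1 := Nat.cast_nonneg _
  have h2 : (0 : ℝ) ≤ m.2 := Nat.cast_nonneg _
  constructor <;> [exact_mod_cast (by linarith : (m.1 : ℝ) ≤ ⌈η⌉₊);
    exact_mod_cast (by linarith : (m.2 : ℝ) ≤ ⌈η⌉₊)]

end AnnealedNorms

open AnnealedNorms in
theorem stmt_19_general {Ω : Type} [MeasurableSpace Ω] (P : Measure Ω)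
    (η p : ℝ) (hp : 1 ≤ p) :
    ∃ C : ℝ, 0 < C ∧ ∀ r : ℝ, 0 < r → ∀ x : E2, ∀ c : ℕ × ℕ → Ω → ℝ,
      (∀ n : ℕ × ℕ, ((n.1 : ℝ) + 2 * n.2) < η → MemLp (c n) (ENNReal.ofReal p) P) →
      ∀ n : ℕ × ℕ, ((n.1 : ℝ) + 2 * n.2) < η →
        ENNReal.ofReal (r ^ ((n.1 : ℝ) + 2 * n.2)) * eLpNorm (c n) (ENNReal.ofReal p) P
          ≤ ENNReal.ofReal (C * ((volume {z : E2 | pnorm (z - x) ≤ r}).toReal)⁻¹ *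
              ∫ z in {z : E2 | pnorm (z - x) ≤ r},
                (eLpNorm (fun ω =>
                    ∑ᶠ m ∈ {m : ℕ × ℕ | ((m.1 : ℝ) + 2 * m.2) < η},
                      c m ω * (z 0 - x 0) ^ m.1 * (z 1 - x 1) ^ m.2)
                  (ENNReal.ofReal p) P).toReal) := by
  have : Fact (1 ≤ ENNReal.ofReal p) := ⟨ENNReal.one_le_ofReal.mpr hp⟩
  have hS := finite_setOf_add_two_mul_lt η
  obtain ⟨C, hC, hbound⟩ := exists_pow_mul_norm_le_average_norm hS.toFinset
  refine ⟨C, hC, fun r hr x c hc n hn => ?_⟩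
  have hcS : ∀ m : hS.toFinset, MemLp (c m) (ENNReal.ofReal p) P :=
    fun m => hc m (hS.mem_toFinset.mp m.2)
  have h := hbound (X := Lp ℝ (ENNReal.ofReal p) P) r hr x (fun m => (hcS m).toLp (c m))
    ⟨n, hS.mem_toFinset.mpr hn⟩
  have hpoly : ∀ z : E2, (fun ω => ∑ m : hS.toFinset, coordMonomial m (z - x) * c m ω)
      = fun ω => ∑ᶠ m ∈ {m : ℕ × ℕ | ((m.1 : ℝ) + 2 * m.2) < η},
          c m ω * (z 0 - x 0) ^ m.1 * (z 1 - x 1) ^ m.2 := by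
    intro z
    ext ω
    rw [finsum_mem_eq_finite_toFinset_sum _ hS]
    refine (Finset.sum_coe_sort hS.toFinset fun m => coordMonomial m (z - x) * c m ω).trans ?_
    exact Finset.sum_congr rfl fun m _ => by
      rw [coordMonomial, PiLp.sub_apply, PiLp.sub_apply]
      ring
  simp only [Lp.norm_toLp, norm_sum_smul_toLp, hpoly] at h
  have hdeg : r ^ ((n.1 : ℝ) + 2 * n.2) = r ^ parabolicDegree n := by
    rw [← Real.rpow_natCast, parabolicDegree]
    push_cast
    rfl
  rw [hdeg, ← ENNReal.ofReal_toReal (hc n hn).eLpNorm_ne_top,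
    ← ENNReal.ofReal_mul (by positivity)]
  exact ENNReal.ofReal_le_ofReal h

/-- Annealed equivalence of norms for random anisotropic polynomials (the
'three-point argument' ingredient in the proof of Lemma 7.3): with a constant `C`
depending only on `η` and `p`, for all `r > 0`, base points `x`, and p-integrable
random coefficients `c_n` (`|n| < η`),
`max_{|n|<η} r^{|n|} E^{1/p}|c_n|^p ≤ C ⨍_{B_r(x)} E^{1/p}|Σ_n c_n (z−x)^n|^p dz`. -/
theorem stmt_19 {Ω : Type} [MeasurableSpace Ω] (P : Measure Ω) [IsProbabilityMeasure P]
    (η p : ℝ) (hη : 0 < η) (hp : 1 ≤ p) :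
    ∃ C : ℝ, 0 < C ∧ ∀ r : ℝ, 0 < r → ∀ x : E2, ∀ c : ℕ × ℕ → Ω → ℝ,
      (∀ n : ℕ × ℕ, ((n.1 : ℝ) + 2 * n.2) < η → MemLp (c n) (ENNReal.ofReal p) P) →
      ∀ n : ℕ × ℕ, ((n.1 : ℝ) + 2 * n.2) < η →
        ENNReal.ofReal (r ^ ((n.1 : ℝ) + 2 * n.2)) * eLpNorm (c n) (ENNReal.ofReal p) P
          ≤ ENNReal.ofReal (C * ((volume {z : E2 | pnorm (z - x) ≤ r}).toReal)⁻¹ *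
              ∫ z in {z : E2 | pnorm (z - x) ≤ r},
                (eLpNorm (fun ω =>
                    ∑ᶠ m ∈ {m : ℕ × ℕ | ((m.1 : ℝ) + 2 * m.2) < η},
                      c m ω * (z 0 - x 0) ^ m.1 * (z 1 - x 1) ^ m.2)
                  (ENNReal.ofReal p) P).toReal) :=
  stmt_19_general P η p hp
end
end
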